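/- arXiv:1004.0838 — 3 statements merged into one kernel-verified Lean document; each statement's English description precedes it below -/
import Mathlib

section
/- Let M : {0,1}* → ℝ≥0 be a martingale (i.e., M(σ) = (M(σ0) + M(σ1))/2 for all σ) taking values in the natural numbers. Then for every string σ there exists an extension τ of σ such that M(τ') = M(τ) for every extension τ' of τ. -/
open Filter

/-- The initial segment of length `n` of an infinite binary sequence. -/
def seg (X : ℕ → Bool) (n : ℕ) : List Bool := List.ofFn (fun i : Fin n => X i)

/-- The martingale fairness condition. -/
def fairM (M : List Bool → ℝ) : Prop :=
  ∀ σ : List Bool, M σ = (M (σ ++ [false]) + M (σ ++ [true])) / 2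

/-!
Among the extensions of `σ`, a natural-valued martingale attains a least value, say at `τ`.
By fairness `M τ` is the average of the values at the two children of `τ`, neither of which is
below `M τ`, so both equal `M τ`; hence `τ` is again a minimiser and induction shows that `M` is
constant on the extensions of `τ`.
-/

namespace fairM

variable {M : List Bool → ℝ}

theorem append_singleton_eq_of_le (hfair : fairM M) {σ : List Bool}
    (hfalse : M σ ≤ M (σ ++ [false])) (htrue : M σ ≤ M (σ ++ [true])) (b : Bool) :
    M (σ ++ [b]) = M σ := by
  have hσ := hfair σ
  cases b <;> linarith

theorem eq_of_isMinOn (hfair : fairM M) {σ τ : List Bool} (hστ : σ <+: τ)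
    (hmin : IsMinOn M {ρ | σ <+: ρ} τ) (τ' : List Bool) (hττ' : τ <+: τ') : M τ' = M τ := by
  obtain ⟨ρ, rfl⟩ := hττ'
  suffices ∀ υ, σ <+: υ → M υ = M τ → M (υ ++ ρ) = M τ from this τ hστ rfl
  induction ρ with
  | nil => simp
  | cons b ρ ih =>
    intro υ hσυ hυ
    have hle (c : Bool) : M υ ≤ M (υ ++ [c]) :=
      hυ ▸ hmin (hσυ.trans (List.prefix_append υ [c]))
    have hchild : M (υ ++ [b]) = M τ :=
      (hfair.append_singleton_eq_of_le (hle false) (hle true) b).trans hυ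
    simpa using ih (υ ++ [b]) (hσυ.trans (List.prefix_append υ [b])) hchild

end fairM

theorem stmt0_general (M : List Bool → ℝ)
    (hfair : fairM M)
    (hint : ∀ σ, ∃ k : ℕ, M σ = k) :
    ∀ σ : List Bool, ∃ τ : List Bool, σ <+: τ ∧
      ∀ τ' : List Bool, τ <+: τ' → M τ' = M τ := by
  intro σ
  choose g hg using hint
  let τ := Function.argminOn g {ρ | σ <+: ρ} ⟨σ, List.prefix_refl σ⟩
  have hστ : σ <+: τ := Function.argminOn_mem g {ρ | σ <+: ρ} _
  have hmin : IsMinOn M {ρ | σ <+: ρ} τ := isMinOn_iff.mpr fun ρ hρ => by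
    rw [hg, hg]
    exact_mod_cast Function.argminOn_le g _ hρ
  exact ⟨τ, hστ, hfair.eq_of_isMinOn hστ hmin⟩

/-- An integer-valued martingale can always be permanently defeated: below any
string `σ` there is an extension `τ` on whose extensions `M` is constant. -/
theorem stmt0 (M : List Bool → ℝ)
    (hfair : fairM M) (hnonneg : ∀ σ, 0 ≤ M σ)
    (hint : ∀ σ, ∃ k : ℕ, M σ = k) :
    ∀ σ : List Bool, ∃ τ : List Bool, σ <+: τ ∧
      ∀ τ' : List Bool, τ <+: τ' → M τ' = M τ :=
  stmt0_general M hfair hint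
end

section
/- For any integer-valued martingale M, the set of infinite binary sequences on which M does not succeed (i.e., on which sup_n M(X↾n) < ∞) contains a dense open subset of Cantor space, hence is comeager. -/
/-!
Since `M` takes values in `ℕ`, every string `σ` has an extension `τ` at which `M` is minimal
among all extensions of `τ`. Fairness then forces `M` to be constant above `τ`: the two children
of a node average to its value and neither lies below `M τ`. Hence `M` is bounded on every
sequence through such a `τ`, and the union of these cylinders is a dense open set.
-/

open Filter

/-- `M` mSucceeds on `X`: `limsup_n M(X↾n) = ∞`, equivalently the capital is
unbounded along `X`. -/
def mSucceeds (M : List Bool → ℝ) (X : ℕ → Bool) : Prop :=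
  ∀ C : ℝ, ∃ n : ℕ, C < M (seg X n)

def cyl (σ : List Bool) : Set (ℕ → Bool) := {X | seg X σ.length = σ}

@[simp]
lemma seg_length (X : ℕ → Bool) (n : ℕ) : (seg X n).length = n :=
  List.length_ofFn

lemma seg_add (X : ℕ → Bool) (m n : ℕ) :
    seg X (m + n) = seg X m ++ List.ofFn (fun i : Fin n => X (m + i)) := by
  simp [seg, List.ofFn_add]

lemma cyl_seg (X : ℕ → Bool) (n : ℕ) : cyl (seg X n) = PiNat.cylinder X n := by
  ext Y
  simp [cyl, PiNat.mem_cylinder_iff, seg, funext_iff, Fin.forall_iff]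

lemma isOpen_cyl (σ : List Bool) : IsOpen (cyl σ) :=
  have hcont : Continuous fun (X : ℕ → Bool) (i : Fin σ.length) => X i :=
    continuous_pi fun i => continuous_apply (i : ℕ)
  hcont.isOpen_preimage {v | List.ofFn v = σ} (isOpen_discrete _)

lemma cyl_nonempty (σ : List Bool) : (cyl σ).Nonempty :=
  ⟨fun i => σ.getD i false, List.ext_getElem (by simp) fun i _ _ => by simp [seg]⟩

lemma cyl_append_subset (σ ρ : List Bool) : cyl (σ ++ ρ) ⊆ cyl σ := by
  intro X hX
  have h : seg X σ.length ++ List.ofFn (fun i : Fin ρ.length => X (σ.length + i)) = σ ++ ρ := by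
    rw [← seg_add, ← List.length_append]; exact hX
  exact (List.append_inj h (seg_length X _)).1

lemma exists_seg_eq_append_of_mem_cyl {τ : List Bool} {X : ℕ → Bool} (hX : X ∈ cyl τ)
    {n : ℕ} (hn : τ.length ≤ n) : ∃ ρ, seg X n = τ ++ ρ := by
  obtain ⟨k, rfl⟩ := Nat.exists_eq_add_of_le hn
  exact ⟨_, by rw [seg_add, hX]⟩

lemma not_mSucceeds_of_forall_le_eq {M : List Bool → ℝ} {X : ℕ → Bool} {N : ℕ}
    (h : ∀ n, N ≤ n → M (seg X n) = M (seg X N)) : ¬ mSucceeds M X := by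
  intro hX
  obtain ⟨C, hC⟩ := ((Set.finite_Iic N).image fun n => M (seg X n)).bddAbove
  obtain ⟨n, hn⟩ := hX C
  rcases le_total n N with hnN | hNn
  · exact hn.not_ge (hC ⟨n, hnN, rfl⟩)
  · exact hn.not_ge (h n hNn ▸ hC ⟨N, Set.mem_Iic.2 le_rfl, rfl⟩)

lemma exists_forall_le_of_natCast {α : Type*} [Nonempty α] (f : α → ℝ)
    (hf : ∀ a, ∃ k : ℕ, f a = k) : ∃ a, ∀ b, f a ≤ f b := by
  choose g hg using hf
  exact ⟨Function.argmin g, fun b => by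
    rw [hg, hg]; exact_mod_cast Function.argmin_le g b⟩

lemma fairM.append_eq_of_forall_le {M : List Bool → ℝ} (hfair : fairM M) {τ : List Bool}
    (hτ : ∀ ρ, M τ ≤ M (τ ++ ρ)) (ρ : List Bool) : M (τ ++ ρ) = M τ := by
  induction ρ using List.reverseRecOn with
  | nil => simp
  | append_singleton ρ b ih =>
    have h0 := hτ (ρ ++ [false])
    have h1 := hτ (ρ ++ [true])
    have := hfair (τ ++ ρ)
    simp only [← List.append_assoc] at h0 h1 ⊢
    cases b <;> linarith

lemma dense_biUnion_cyl {S : Set (List Bool)} (hS : ∀ σ, ∃ ρ, σ ++ ρ ∈ S) :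
    Dense (⋃ τ ∈ S, cyl τ) := by
  refine (PiNat.isTopologicalBasis_cylinders _).dense_iff.2 ?_
  rintro _ ⟨X, n, rfl⟩ -
  obtain ⟨ρ, hρ⟩ := hS (seg X n)
  obtain ⟨Y, hY⟩ := cyl_nonempty (seg X n ++ ρ)
  exact ⟨Y, cyl_seg X n ▸ cyl_append_subset _ _ hY, Set.mem_biUnion hρ hY⟩

theorem stmt2_general (M : List Bool → ℝ)
    (hfair : fairM M)
    (hint : ∀ σ, ∃ k : ℕ, M σ = k) :
    (∃ U : Set (ℕ → Bool), IsOpen U ∧ Dense U ∧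
        U ⊆ {X : ℕ → Bool | ¬ mSucceeds M X}) ∧
      {X : ℕ → Bool | ¬ mSucceeds M X} ∈ residual (ℕ → Bool) := by
  set S := {τ : List Bool | ∀ ρ, M τ ≤ M (τ ++ ρ)}
  have hS : ∀ σ, ∃ ρ, σ ++ ρ ∈ S := fun σ => by
    obtain ⟨ρ, hρ⟩ := exists_forall_le_of_natCast (fun ρ => M (σ ++ ρ)) fun ρ => hint _
    exact ⟨ρ, fun ρ' => by simpa using hρ (ρ ++ ρ')⟩
  have hopen : IsOpen (⋃ τ ∈ S, cyl τ) := isOpen_biUnion fun τ _ => isOpen_cyl τ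
  have hdense : Dense (⋃ τ ∈ S, cyl τ) := dense_biUnion_cyl hS
  have hsub : (⋃ τ ∈ S, cyl τ) ⊆ {X | ¬ mSucceeds M X} :=
    Set.iUnion₂_subset fun τ hτ X hX => not_mSucceeds_of_forall_le_eq fun n hn => by
      obtain ⟨ρ, hρ⟩ := exists_seg_eq_append_of_mem_cyl hX hn
      rw [hρ, hX, hfair.append_eq_of_forall_le hτ]
  exact ⟨⟨_, hopen, hdense, hsub⟩, mem_of_superset (residual_of_dense_open hopen hdense) hsub⟩

/-- For any integer-valued martingale `M`, the set of sequences on which `M`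
does not succeed contains a dense open set, hence is comeager. -/
theorem stmt2 (M : List Bool → ℝ)
    (hfair : fairM M) (hnonneg : ∀ σ, 0 ≤ M σ)
    (hint : ∀ σ, ∃ k : ℕ, M σ = k) :
    (∃ U : Set (ℕ → Bool), IsOpen U ∧ Dense U ∧
        U ⊆ {X : ℕ → Bool | ¬ mSucceeds M X}) ∧
      {X : ℕ → Bool | ¬ mSucceeds M X} ∈ residual (ℕ → Bool) :=
  stmt2_general M hfair hint
end

section
/- Let A ⊆ ℕ be an infinite set that contains an infinite decidable (recursive) subset B, viewed as a sequence X_A ∈ {0,1}^ω via its characteristic function. Fix n ≥ 1. Then the {0,n}-valued martingale that bets n dollars on outcome 1 at positions in B and bets 0 elsewhere (starting with capital n) succeeds on X_A, i.e., limsup_k M(X_A↾k) = ∞. Consequently every {0,n}-valued random real is bi-immune. -/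
open Filter

/-! Along `X` the capital never drops below `n`, so every bet at a position of `B` is placed and
wins; hence after `k` rounds the capital is `n` times one plus the number of positions of `B`
below `k`, which is unbounded when `B` is infinite. -/

@[simp]
lemma seg_zero (X : ℕ → Bool) : seg X 0 = [] := rfl

lemma seg_succ (X : ℕ → Bool) (k : ℕ) : seg X (k + 1) = seg X k ++ [X k] := by
  rw [seg, List.ofFn_succ']
  simp [seg, List.concat_eq_append]

@[simp]
lemma length_seg (X : ℕ → Bool) (k : ℕ) : (seg X k).length = k := by
  simp [seg]

lemma capital_seg_eq (B : Set ℕ) [DecidablePred (· ∈ B)] (X : ℕ → Bool)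
    (hBX : ∀ i ∈ B, X i = true) (n : ℕ) (M : List Bool → ℝ) (hinit : M [] = n)
    (hbet : ∀ σ : List Bool, σ.length ∈ B → (n : ℝ) ≤ M σ → M (σ ++ [true]) = M σ + n)
    (habstain : ∀ σ : List Bool, σ.length ∉ B → ∀ b : Bool, M (σ ++ [b]) = M σ) (k : ℕ) :
    M (seg X k) = n * (1 + Nat.count (· ∈ B) k) := by
  induction k with
  | zero => simp [hinit]
  | succ k ih =>
    rw [seg_succ, Nat.count_succ]
    by_cases hk : k ∈ B
    · have hcapital : (n : ℝ) ≤ M (seg X k) := by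
        rw [ih]
        exact le_mul_of_one_le_right n.cast_nonneg (by simp)
      rw [hBX k hk, hbet _ (by simpa using hk) hcapital, ih]
      simp only [hk, if_true]
      push_cast
      ring
    · rw [habstain _ (by simpa using hk), ih]
      simp [hk]

theorem stmt9_general (B : Set ℕ) (hB : B.Infinite) (X : ℕ → Bool)
    (hBX : ∀ i ∈ B, X i = true) (n : ℕ) (hn : 1 ≤ n)
    (M : List Bool → ℝ)
    (hinit : M [] = n)
    (hbet : ∀ σ : List Bool, σ.length ∈ B → (n : ℝ) ≤ M σ →
      M (σ ++ [true]) = M σ + n)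
    (habstain : ∀ σ : List Bool, σ.length ∉ B → ∀ b : Bool, M (σ ++ [b]) = M σ) :
    ∀ C : ℝ, ∃ k : ℕ, C < M (seg X k) := by
  classical
  intro C
  obtain ⟨m, hm⟩ := exists_nat_ge C
  refine ⟨Nat.nth (· ∈ B) m, ?_⟩
  rw [capital_seg_eq B X hBX n M hinit hbet habstain, Nat.count_nth_of_infinite (p := (· ∈ B)) hB]
  have hn' : (1 : ℝ) ≤ n := by exact_mod_cast hn
  calc C < 1 + m := by linarith
    _ ≤ n * (1 + m) := le_mul_of_one_le_left (by positivity) hn'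

/-- If the characteristic sequence `X` of a set `A` is `true` on an infinite
set `B`, then the `{0,n}`-valued martingale betting `n` dollars on outcome `1`
at positions in `B` (and abstaining elsewhere), with initial capital `n`,
succeeds on `X`.  (Hence every `{0,n}`-valued random real is bi-immune.) -/
theorem stmt9 (B : Set ℕ) (hB : B.Infinite) (X : ℕ → Bool)
    (hBX : ∀ i ∈ B, X i = true) (n : ℕ) (hn : 1 ≤ n)
    (M : List Bool → ℝ)
    (hfair : fairM M) (hnonneg : ∀ σ, 0 ≤ M σ)
    (hinit : M [] = n)
    (hbet : ∀ σ : List Bool, σ.length ∈ B → (n : ℝ) ≤ M σ →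
      M (σ ++ [true]) = M σ + n)
    (habstain : ∀ σ : List Bool, σ.length ∉ B → ∀ b : Bool, M (σ ++ [b]) = M σ) :
    ∀ C : ℝ, ∃ k : ℕ, C < M (seg X k) :=
  stmt9_general B hB X hBX n hn M hinit hbet habstain
end
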